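/- arXiv:math/0301236 — 2 statements merged into one kernel-verified Lean document; each statement's English description precedes it below -/
import Mathlib

section
/- Let S^{ab} = S^{ba}, γ^a, θ be smooth real-valued functions on ℝⁿ and let Δ_w (w ∈ ℝ) be the associated canonical pencil. Then the pencil satisfies the self-adjointness condition (Δ_w)* = Δ_{1−w}: for every w ∈ ℝ, every compactly supported smooth function f on ℝⁿ and every smooth function g on ℝⁿ that is compactly supported, ∫_{ℝⁿ} (Δ_w f)(x)·g(x) dx = ∫_{ℝⁿ} f(x)·(Δ_{1−w} g)(x) dx. -/
/-!
Pointwise, `Δ_w f · g - f · Δ_{1-w} g` is half the divergence of the vector field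
`J^a = Σ_b S^{ab} (∂_b f · g - f · ∂_b g) + (2w - 1) γ^a f g`: the second-order part of the pencil is
the divergence-form operator `∂_a (S^{ab} ∂_b ·)`, which satisfies Green's identity because `S` is
symmetric; the first-order `γ`-terms of the two sides combine to `(2w - 1) ∂_a (γ^a f g)`; and the
`θ`-terms cancel since `w (w - 1) = (1 - w) (-w)`. The field `J` is `C¹` and vanishes outside the
support of `f`, so its divergence integrates to zero.
-/

open scoped BigOperators

/-- Partial derivative `∂_a f` of a function on `ℝⁿ`. -/
noncomputable def pd {n : ℕ} (a : Fin n) (f : (Fin n → ℝ) → ℝ) : (Fin n → ℝ) → ℝ :=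
  fun x => fderiv ℝ f x (Pi.single a 1)

/-- The canonical pencil of operators associated to data `(S^{ab}, γ^a, θ)`:
`Δ_w f = (1/2)·(Σ_{a,b} S^{ab} ∂_a∂_b f + Σ_a (Σ_b ∂_b S^{ba} + (2w−1)γ^a) ∂_a f
  + (w·Σ_a ∂_a γ^a + w(w−1)·θ)·f)`. -/
noncomputable def canonicalPencil {n : ℕ} (S : Fin n → Fin n → (Fin n → ℝ) → ℝ)
    (γ : Fin n → (Fin n → ℝ) → ℝ) (θ : (Fin n → ℝ) → ℝ) (w : ℝ)
    (f : (Fin n → ℝ) → ℝ) : (Fin n → ℝ) → ℝ :=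
  fun x => (1/2) * ((∑ a, ∑ b, S a b x * pd a (pd b f) x)
    + (∑ a, ((∑ b, pd b (S b a) x) + (2 * w - 1) * γ a x) * pd a f x)
    + (w * (∑ a, pd a (γ a) x) + w * (w - 1) * θ x) * f x)

open MeasureTheory

lemma MeasureTheory.integral_add_eq_left_of_integral_eq_zero {α E : Type*} [MeasurableSpace α]
    [NormedAddCommGroup E] [NormedSpace ℝ E] {μ : Measure α} {u v : α → E}
    (hv : Integrable v μ) (hv₀ : ∫ x, v x ∂μ = 0) :
    ∫ x, u x + v x ∂μ = ∫ x, u x ∂μ := by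
  by_cases hu : Integrable u μ
  · rw [integral_add hu hv, hv₀, add_zero]
  · rw [integral_undef hu, integral_undef (mt (integrable_add_iff_integrable_left' hv).1 hu)]

section PartialDerivative

variable {n : ℕ}

lemma contDiff_pd {k : WithTop ℕ∞} (a : Fin n) {f : (Fin n → ℝ) → ℝ}
    (hf : ContDiff ℝ (k + 1) f) : ContDiff ℝ k (pd a f) :=
  (hf.fderiv_right le_rfl).clm_apply contDiff_const

lemma hasCompactSupport_pd (a : Fin n) {f : (Fin n → ℝ) → ℝ} (hf : HasCompactSupport f) :
    HasCompactSupport (pd a f) :=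
  (hf.fderiv (𝕜 := ℝ)).comp_left (g := fun L : (Fin n → ℝ) →L[ℝ] ℝ ↦ L (Pi.single a 1)) rfl

lemma pd_eq_zero_of_notMem_tsupport (a : Fin n) {f : (Fin n → ℝ) → ℝ} {x : Fin n → ℝ}
    (hx : x ∉ tsupport f) : pd a f x = 0 := by
  simp [pd, image_eq_zero_of_notMem_tsupport (fun h ↦ hx (tsupport_fderiv_subset ℝ h))]

variable {u v : (Fin n → ℝ) → ℝ} {x : Fin n → ℝ}

lemma pd_add (a : Fin n) (hu : DifferentiableAt ℝ u x) (hv : DifferentiableAt ℝ v x) :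
    pd a (fun y ↦ u y + v y) x = pd a u x + pd a v x := by
  simp [pd, fderiv_fun_add hu hv]

lemma pd_sub (a : Fin n) (hu : DifferentiableAt ℝ u x) (hv : DifferentiableAt ℝ v x) :
    pd a (fun y ↦ u y - v y) x = pd a u x - pd a v x := by
  simp [pd, fderiv_fun_sub hu hv]

lemma pd_mul (a : Fin n) (hu : DifferentiableAt ℝ u x) (hv : DifferentiableAt ℝ v x) :
    pd a (fun y ↦ u y * v y) x = pd a u x * v x + u x * pd a v x := by
  simp only [pd, fderiv_fun_mul hu hv, add_apply,
    smul_apply, smul_eq_mul]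
  ring

lemma pd_const_mul (a : Fin n) (c : ℝ) (hu : DifferentiableAt ℝ u x) :
    pd a (fun y ↦ c * u y) x = c * pd a u x := by
  simp [pd, fderiv_const_mul hu c]

lemma pd_sum (a : Fin n) {ι : Type*} (s : Finset ι) {F : ι → (Fin n → ℝ) → ℝ}
    (hF : ∀ i ∈ s, DifferentiableAt ℝ (F i) x) :
    pd a (fun y ↦ ∑ i ∈ s, F i y) x = ∑ i ∈ s, pd a (F i) x := by
  simp [pd, fderiv_fun_sum hF]

lemma integrable_pd (a : Fin n) (hu : ContDiff ℝ 1 u) (huc : HasCompactSupport u) :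
    Integrable (pd a u) :=
  (contDiff_pd a (k := 0) hu).continuous.integrable_of_hasCompactSupport
    (hasCompactSupport_pd a huc)

lemma integral_pd_eq_zero (a : Fin n) (hu : ContDiff ℝ 1 u) (huc : HasCompactSupport u) :
    ∫ x, pd a u x = 0 := by
  have hpd : Integrable fun x ↦ fderiv ℝ u x (Pi.single a 1) := integrable_pd a hu huc
  have h := integral_mul_fderiv_eq_neg_fderiv_mul_of_integrable (μ := volume) (v := Pi.single a 1)
    (f := u) (g := fun _ ↦ (1 : ℝ)) (by simpa using hpd) (by simp)
    (by simpa using hu.continuous.integrable_of_hasCompactSupport huc)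
    (fun x _ ↦ hu.differentiable one_ne_zero x) (fun x _ ↦ differentiableAt_const _)
  simpa [pd] using h.symm

end PartialDerivative

section Divergence

variable {n : ℕ}

noncomputable def divergence (F : Fin n → (Fin n → ℝ) → ℝ) (x : Fin n → ℝ) : ℝ :=
  ∑ a, pd a (F a) x

variable {F : Fin n → (Fin n → ℝ) → ℝ}

lemma integrable_divergence (hF : ∀ a, ContDiff ℝ 1 (F a))
    (hFc : ∀ a, HasCompactSupport (F a)) : Integrable (divergence F) :=
  integrable_finsetSum _ fun a _ ↦ integrable_pd a (hF a) (hFc a)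

lemma integral_divergence_eq_zero (hF : ∀ a, ContDiff ℝ 1 (F a))
    (hFc : ∀ a, HasCompactSupport (F a)) : ∫ x, divergence F x = 0 := by
  unfold divergence
  rw [integral_finsetSum _ fun a _ ↦ integrable_pd a (hF a) (hFc a)]
  exact Finset.sum_eq_zero fun a _ ↦ integral_pd_eq_zero a (hF a) (hFc a)

end Divergence

section Flux

variable {n : ℕ} (S : Fin n → Fin n → (Fin n → ℝ) → ℝ) (f g : (Fin n → ℝ) → ℝ)

noncomputable def greenFlux (a : Fin n) : (Fin n → ℝ) → ℝ :=
  fun y ↦ ∑ b, S a b y * (pd b f y * g y - f y * pd b g y)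

variable {S f g} {x : Fin n → ℝ}

lemma divergence_greenFlux (hSsym : ∀ a b, S a b = S b a)
    (hS : ∀ a b, DifferentiableAt ℝ (S a b) x)
    (hf : DifferentiableAt ℝ f x) (hf' : ∀ b, DifferentiableAt ℝ (pd b f) x)
    (hg : DifferentiableAt ℝ g x) (hg' : ∀ b, DifferentiableAt ℝ (pd b g) x) :
    divergence (greenFlux S f g) x =
      ((∑ a, ∑ b, S a b x * pd a (pd b f) x) + ∑ a, (∑ b, pd b (S b a) x) * pd a f x) * g x
        - f x * ((∑ a, ∑ b, S a b x * pd a (pd b g) x)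
          + ∑ a, (∑ b, pd b (S b a) x) * pd a g x) := by
  have hexpand : ∀ a, pd a (greenFlux S f g a) x =
      ∑ b, ((S a b x * pd a (pd b f) x + pd a (S a b) x * pd b f x) * g x
        - f x * (S a b x * pd a (pd b g) x + pd a (S a b) x * pd b g x)
        + S a b x * (pd b f x * pd a g x - pd a f x * pd b g x)) := by
    intro a
    unfold greenFlux
    rw [pd_sum a _ fun b _ ↦ by fun_prop]
    refine Finset.sum_congr rfl fun b _ ↦ ?_
    rw [pd_mul a (by fun_prop) (by fun_prop), pd_sub a (by fun_prop) (by fun_prop),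
      pd_mul a (by fun_prop) (by fun_prop), pd_mul a (by fun_prop) (by fun_prop)]
    ring
  have hcross : ∑ a, ∑ b, S a b x * (pd b f x * pd a g x - pd a f x * pd b g x) = 0 := by
    simp only [mul_sub, Finset.sum_sub_distrib, sub_eq_zero]
    rw [Finset.sum_comm]
    simp only [hSsym, mul_comm (pd _ f x)]
  have htransport (u : (Fin n → ℝ) → ℝ) :
      ∑ a, ∑ b, pd a (S a b) x * pd b u x = ∑ a, (∑ b, pd b (S b a) x) * pd a u x := by
    rw [Finset.sum_comm]
    simp only [Finset.sum_mul]
  simp only [divergence, hexpand, Finset.sum_add_distrib, Finset.sum_sub_distrib, hcross,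
    ← Finset.sum_mul, ← Finset.mul_sum, htransport, add_zero]

lemma contDiff_greenFlux {k : WithTop ℕ∞} (hS : ∀ a b, ContDiff ℝ k (S a b))
    (hf : ContDiff ℝ (k + 1) f) (hg : ContDiff ℝ (k + 1) g) (a : Fin n) :
    ContDiff ℝ k (greenFlux S f g a) := by
  have hf' := fun b ↦ contDiff_pd b hf
  have hg' := fun b ↦ contDiff_pd b hg
  have := hf.of_le le_self_add
  have := hg.of_le le_self_add
  unfold greenFlux
  fun_prop

lemma hasCompactSupport_greenFlux (hf : HasCompactSupport f) (a : Fin n) :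
    HasCompactSupport (greenFlux S f g a) := by
  refine hf.mono' fun y hy ↦ ?_
  by_contra hyf
  simp [greenFlux, image_eq_zero_of_notMem_tsupport hyf, pd_eq_zero_of_notMem_tsupport _ hyf] at hy

end Flux

section Pencil

variable {n : ℕ} (S : Fin n → Fin n → (Fin n → ℝ) → ℝ) (γ : Fin n → (Fin n → ℝ) → ℝ) (w : ℝ)
  (f g : (Fin n → ℝ) → ℝ)

noncomputable def pencilFlux (a : Fin n) : (Fin n → ℝ) → ℝ :=
  fun y ↦ greenFlux S f g a y + (2 * w - 1) * (γ a y * (f y * g y))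

variable {S γ f g}

lemma canonicalPencil_mul_eq_add_divergence (θ : (Fin n → ℝ) → ℝ) {x : Fin n → ℝ}
    (hSsym : ∀ a b, S a b = S b a) (hS : ∀ a b, Differentiable ℝ (S a b))
    (hγ : ∀ a, Differentiable ℝ (γ a))
    (hf : Differentiable ℝ f) (hf' : ∀ b, Differentiable ℝ (pd b f))
    (hg : Differentiable ℝ g) (hg' : ∀ b, Differentiable ℝ (pd b g)) :
    canonicalPencil S γ θ w f x * g x =
      f x * canonicalPencil S γ θ (1 - w) g x + divergence (pencilFlux S γ w f g) x / 2 := by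
  have hgreen : ∀ a, Differentiable ℝ (greenFlux S f g a) := fun a ↦ by
    unfold greenFlux; fun_prop
  have hsplit : divergence (pencilFlux S γ w f g) x = divergence (greenFlux S f g) x
      + (2 * w - 1) * ((∑ a, pd a (γ a) x) * (f x * g x)
        + ((∑ a, γ a x * pd a f x) * g x + f x * ∑ a, γ a x * pd a g x)) := by
    have hterm : ∀ a, pd a (pencilFlux S γ w f g a) x = pd a (greenFlux S f g a) x
        + (2 * w - 1) * (pd a (γ a) x * (f x * g x)
          + (γ a x * pd a f x * g x + f x * (γ a x * pd a g x))) := fun a ↦ by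
      unfold pencilFlux
      rw [pd_add a (by fun_prop) (by fun_prop), pd_const_mul a _ (by fun_prop),
        pd_mul a (by fun_prop) (by fun_prop), pd_mul a (by fun_prop) (by fun_prop)]
      ring
    simp only [divergence, hterm, Finset.sum_add_distrib, ← Finset.mul_sum, ← Finset.sum_mul]
  rw [hsplit, divergence_greenFlux hSsym (fun a b ↦ hS a b x) (hf x) (fun b ↦ hf' b x) (hg x)
    (fun b ↦ hg' b x)]
  simp only [canonicalPencil, add_mul, Finset.sum_add_distrib, mul_assoc, ← Finset.mul_sum]
  ring

lemma contDiff_pencilFlux {k : WithTop ℕ∞} (hS : ∀ a b, ContDiff ℝ k (S a b))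
    (hγ : ∀ a, ContDiff ℝ k (γ a)) (hf : ContDiff ℝ (k + 1) f) (hg : ContDiff ℝ (k + 1) g)
    (a : Fin n) : ContDiff ℝ k (pencilFlux S γ w f g a) := by
  have := contDiff_greenFlux hS hf hg a
  have := hf.of_le le_self_add
  have := hg.of_le le_self_add
  unfold pencilFlux
  fun_prop

lemma hasCompactSupport_pencilFlux (hf : HasCompactSupport f) (a : Fin n) :
    HasCompactSupport (pencilFlux S γ w f g a) :=
  (hasCompactSupport_greenFlux hf a).add (hf.mul_right.mul_left.mul_left)

end Pencil

theorem canonicalPencil_selfAdjoint_general {n : ℕ}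
    (S : Fin n → Fin n → (Fin n → ℝ) → ℝ)
    (γ : Fin n → (Fin n → ℝ) → ℝ) (θ : (Fin n → ℝ) → ℝ)
    (hS : ∀ a b, ContDiff ℝ (⊤ : ℕ∞) (S a b)) (hSsym : ∀ a b, S a b = S b a)
    (hγ : ∀ a, ContDiff ℝ (⊤ : ℕ∞) (γ a))
    (w : ℝ) (f g : (Fin n → ℝ) → ℝ)
    (hf : ContDiff ℝ (⊤ : ℕ∞) f) (hfc : HasCompactSupport f)
    (hg : ContDiff ℝ (⊤ : ℕ∞) g) :
    ∫ x, canonicalPencil S γ θ w f x * g x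
      = ∫ x, f x * canonicalPencil S γ θ (1 - w) g x := by
  have hS₁ : ∀ a b, ContDiff ℝ 1 (S a b) := fun a b ↦ (hS a b).of_le (WithTop.coe_le_coe.2 le_top)
  have hγ₁ : ∀ a, ContDiff ℝ 1 (γ a) := fun a ↦ (hγ a).of_le (WithTop.coe_le_coe.2 le_top)
  have hf₂ : ContDiff ℝ (1 + 1) f := hf.of_le (WithTop.coe_le_coe.2 le_top)
  have hg₂ : ContDiff ℝ (1 + 1) g := hg.of_le (WithTop.coe_le_coe.2 le_top)
  have hflux : ∀ a, ContDiff ℝ 1 (pencilFlux S γ w f g a) :=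
    contDiff_pencilFlux w hS₁ hγ₁ hf₂ hg₂
  have hfluxc : ∀ a, HasCompactSupport (pencilFlux S γ w f g a) :=
    hasCompactSupport_pencilFlux w hfc
  simp only [canonicalPencil_mul_eq_add_divergence w θ hSsym
    (fun a b ↦ (hS₁ a b).differentiable one_ne_zero) (fun a ↦ (hγ₁ a).differentiable one_ne_zero)
    (hf₂.differentiable (by simp)) (fun b ↦ (contDiff_pd b hf₂).differentiable one_ne_zero)
    (hg₂.differentiable (by simp)) (fun b ↦ (contDiff_pd b hg₂).differentiable one_ne_zero)]
  refine integral_add_eq_left_of_integral_eq_zero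
    ((integrable_divergence hflux hfluxc).div_const 2) ?_
  rw [integral_div, integral_divergence_eq_zero hflux hfluxc, zero_div]

/-- the canonical pencil satisfies the self-adjointness condition
`(Δ_w)* = Δ_{1−w}`: for compactly supported smooth `f, g`,
`∫ (Δ_w f)·g = ∫ f·(Δ_{1−w} g)`. -/
theorem canonicalPencil_selfAdjoint {n : ℕ}
    (S : Fin n → Fin n → (Fin n → ℝ) → ℝ)
    (γ : Fin n → (Fin n → ℝ) → ℝ) (θ : (Fin n → ℝ) → ℝ)
    (hS : ∀ a b, ContDiff ℝ (⊤ : ℕ∞) (S a b)) (hSsym : ∀ a b, S a b = S b a)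
    (hγ : ∀ a, ContDiff ℝ (⊤ : ℕ∞) (γ a)) (hθ : ContDiff ℝ (⊤ : ℕ∞) θ)
    (w : ℝ) (f g : (Fin n → ℝ) → ℝ)
    (hf : ContDiff ℝ (⊤ : ℕ∞) f) (hfc : HasCompactSupport f)
    (hg : ContDiff ℝ (⊤ : ℕ∞) g) (hgc : HasCompactSupport g) :
    ∫ x, canonicalPencil S γ θ w f x * g x
      = ∫ x, f x * canonicalPencil S γ θ (1 - w) g x :=
  canonicalPencil_selfAdjoint_general S γ θ hS hSsym hγ w f g hf hfc hg
end

section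
/- Let (S^{ab}, γ^a, θ) and (S'^{ab}, γ'^a, θ') be two triples of smooth functions on ℝⁿ with S^{ab} = S^{ba} and S'^{ab} = S'^{ba}, and let Δ_w and Δ'_w be the associated canonical pencils. If for some weight w₀ ∈ ℝ with w₀ ∉ {0, 1/2, 1} the operators coincide at w₀, i.e. Δ_{w₀} f = Δ'_{w₀} f for all smooth f on ℝⁿ, then S^{ab} = S'^{ab}, γ^a = γ'^a and θ = θ'; hence there is a unique canonical pencil passing through a given operator on densities of a non-singular weight w₀ ≠ 0, 1/2, 1. -/
/-!
Evaluating `Δ_{w₀}` on the test functions `1`, `x^c` and `x^c x^d` isolates, one after the other,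
the zeroth-order coefficient `w₀ ∂_a γ^a + w₀(w₀-1) θ`, the first-order coefficients
`∂_b S^{ba} + (2w₀-1) γ^a` and the symmetrised principal part `S^{cd} + S^{dc}`. Symmetry of `S`
then gives `S = S'`; since `2w₀ - 1 ≠ 0` the first-order coefficients give `γ = γ'`, and since
`w₀(w₀-1) ≠ 0` the zeroth-order one gives `θ = θ'`.
-/

open scoped BigOperators

section PartialDerivative

variable {n : ℕ} (a : Fin n)

lemma pd_const (c : ℝ) : pd a (fun _ => c) = fun _ => 0 := by
  funext x; simp [pd]

lemma pd_coord (c : Fin n) : pd a (fun x => x c) = fun _ => (Pi.single a 1 : Fin n → ℝ) c := by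
  funext x
  exact congrArg (· (Pi.single a 1))
    (ContinuousLinearMap.proj c : (Fin n → ℝ) →L[ℝ] ℝ).fderiv

variable {a} {f g : (Fin n → ℝ) → ℝ}

lemma pd_add_s11 (hf : Differentiable ℝ f) (hg : Differentiable ℝ g) :
    pd a (fun x => f x + g x) = fun x => pd a f x + pd a g x := by
  funext x; simp [pd, fderiv_fun_add (hf x) (hg x)]

lemma pd_mul_s11 (hf : Differentiable ℝ f) (hg : Differentiable ℝ g) :
    pd a (fun x => f x * g x) = fun x => f x * pd a g x + g x * pd a f x := by
  funext x; simp [pd, fderiv_fun_mul (hf x) (hg x)]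

end PartialDerivative

section Monomials

variable {n : ℕ} (a b c d : Fin n)

lemma pd_coord_mul_coord :
    pd b (fun x => x c * x d)
      = fun x => x c * (Pi.single b 1 : Fin n → ℝ) d + x d * (Pi.single b 1 : Fin n → ℝ) c := by
  rw [pd_mul_s11 (differentiable_apply c) (differentiable_apply d), pd_coord, pd_coord]

lemma pd_pd_coord_mul_coord :
    pd a (pd b (fun x => x c * x d))
      = fun _ => (Pi.single a 1 : Fin n → ℝ) c * (Pi.single b 1 : Fin n → ℝ) d
        + (Pi.single a 1 : Fin n → ℝ) d * (Pi.single b 1 : Fin n → ℝ) c := by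
  rw [pd_coord_mul_coord, pd_add_s11 (by fun_prop) (by fun_prop),
    pd_mul_s11 (differentiable_apply c) (differentiable_const _),
    pd_mul_s11 (differentiable_apply d) (differentiable_const _), pd_coord, pd_coord]
  funext x
  simp only [pd_const]
  ring

end Monomials

namespace canonicalPencil

variable {n : ℕ} (S : Fin n → Fin n → (Fin n → ℝ) → ℝ) (γ : Fin n → (Fin n → ℝ) → ℝ)
  (θ : (Fin n → ℝ) → ℝ) (w : ℝ)

noncomputable def firstOrderCoeff (a : Fin n) (x : Fin n → ℝ) : ℝ :=
  (∑ b, pd b (S b a) x) + (2 * w - 1) * γ a x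

noncomputable def zerothOrderCoeff (x : Fin n → ℝ) : ℝ :=
  w * (∑ a, pd a (γ a) x) + w * (w - 1) * θ x

variable (x : Fin n → ℝ) (c d : Fin n)

lemma apply_one : canonicalPencil S γ θ w (fun _ => 1) x = zerothOrderCoeff γ θ w x / 2 := by
  simp only [canonicalPencil, zerothOrderCoeff, pd_const, mul_zero, Finset.sum_const_zero]
  ring

lemma apply_coord :
    canonicalPencil S γ θ w (fun x => x c) x
      = (firstOrderCoeff S γ w c x + x c * zerothOrderCoeff γ θ w x) / 2 := by
  simp only [canonicalPencil, firstOrderCoeff, zerothOrderCoeff, pd_coord, pd_const,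
    Pi.single_apply, mul_ite, mul_one, mul_zero, Finset.sum_const_zero, Finset.sum_ite_eq,
    Finset.mem_univ, if_true]
  ring

lemma apply_coord_mul_coord :
    canonicalPencil S γ θ w (fun x => x c * x d) x
      = (S c d x + S d c x + x d * firstOrderCoeff S γ w c x + x c * firstOrderCoeff S γ w d x
        + x c * x d * zerothOrderCoeff γ θ w x) / 2 := by
  simp only [canonicalPencil, pd_pd_coord_mul_coord]
  simp only [firstOrderCoeff, zerothOrderCoeff, pd_coord_mul_coord, Pi.single_apply, mul_ite,
    mul_one, mul_zero, mul_add, Finset.sum_add_distrib, Finset.sum_ite_eq, Finset.mem_univ,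
    if_true]
  ring

variable {S γ θ w} {S' : Fin n → Fin n → (Fin n → ℝ) → ℝ} {γ' : Fin n → (Fin n → ℝ) → ℝ}
  {θ' : (Fin n → ℝ) → ℝ}
  (h : ∀ f : (Fin n → ℝ) → ℝ, ContDiff ℝ (⊤ : ℕ∞) f →
    canonicalPencil S γ θ w f = canonicalPencil S' γ' θ' w f)
include h

lemma zerothOrderCoeff_eq_of_eq : zerothOrderCoeff γ θ w = zerothOrderCoeff γ' θ' w := by
  funext x
  have h1 := congrFun (h (fun _ => 1) contDiff_const) x
  rw [apply_one, apply_one] at h1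
  linarith

lemma firstOrderCoeff_eq_of_eq : firstOrderCoeff S γ w = firstOrderCoeff S' γ' w := by
  funext c x
  have hx := congrFun (h _ (contDiff_apply ℝ ℝ c)) x
  rw [apply_coord, apply_coord, congrFun (zerothOrderCoeff_eq_of_eq h) x] at hx
  linarith

lemma add_transpose_eq_of_eq (c d : Fin n) (x : Fin n → ℝ) :
    S c d x + S d c x = S' c d x + S' d c x := by
  have hxx := congrFun (h _ ((contDiff_apply ℝ ℝ c).mul (contDiff_apply ℝ ℝ d))) x
  rw [apply_coord_mul_coord, apply_coord_mul_coord, congrFun (zerothOrderCoeff_eq_of_eq h) x,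
    firstOrderCoeff_eq_of_eq h] at hxx
  linarith

end canonicalPencil

theorem canonicalPencil_unique_through_nonsingular_weight_general {n : ℕ}
    (S S' : Fin n → Fin n → (Fin n → ℝ) → ℝ)
    (γ γ' : Fin n → (Fin n → ℝ) → ℝ) (θ θ' : (Fin n → ℝ) → ℝ)
    (hSsym : ∀ a b, S a b = S b a)
    (hS'sym : ∀ a b, S' a b = S' b a)
    (w₀ : ℝ) (hw₀ : w₀ ∉ ({0, 1/2, 1} : Set ℝ))
    (heq : ∀ f : (Fin n → ℝ) → ℝ, ContDiff ℝ (⊤ : ℕ∞) f →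
      canonicalPencil S γ θ w₀ f = canonicalPencil S' γ' θ' w₀ f) :
    (∀ a b, S a b = S' a b) ∧ (∀ a, γ a = γ' a) ∧ θ = θ' := by
  obtain ⟨hw0, hw_half, hw1⟩ : w₀ ≠ 0 ∧ w₀ ≠ 1/2 ∧ w₀ ≠ 1 := by simpa [not_or] using hw₀
  have hSS' : ∀ a b, S a b = S' a b := fun a b => funext fun x => by
    have hab := canonicalPencil.add_transpose_eq_of_eq heq a b x
    rw [hSsym b a, hS'sym b a] at hab
    linarith
  have hγγ' : ∀ a, γ a = γ' a := fun a => funext fun x => by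
    have hfirst := congrFun₂ (canonicalPencil.firstOrderCoeff_eq_of_eq heq) a x
    simp only [canonicalPencil.firstOrderCoeff, hSS', add_right_inj] at hfirst
    exact mul_left_cancel₀ (by contrapose! hw_half; linarith) hfirst
  refine ⟨hSS', hγγ', funext fun x => ?_⟩
  have hzeroth := congrFun (canonicalPencil.zerothOrderCoeff_eq_of_eq heq) x
  simp only [canonicalPencil.zerothOrderCoeff, hγγ', add_right_inj] at hzeroth
  exact mul_left_cancel₀ (mul_ne_zero hw0 (sub_ne_zero.mpr hw1)) hzeroth

/-- if two canonical pencils agree at a single non-singular weight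
`w₀ ∉ {0, 1/2, 1}` (as operators on smooth functions), then their data coincide:
`S = S'`, `γ = γ'`, `θ = θ'`; hence there is a unique canonical pencil passing through a
given operator on densities of non-singular weight. -/
theorem canonicalPencil_unique_through_nonsingular_weight {n : ℕ}
    (S S' : Fin n → Fin n → (Fin n → ℝ) → ℝ)
    (γ γ' : Fin n → (Fin n → ℝ) → ℝ) (θ θ' : (Fin n → ℝ) → ℝ)
    (hS : ∀ a b, ContDiff ℝ (⊤ : ℕ∞) (S a b)) (hSsym : ∀ a b, S a b = S b a)
    (hγ : ∀ a, ContDiff ℝ (⊤ : ℕ∞) (γ a)) (hθ : ContDiff ℝ (⊤ : ℕ∞) θ)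
    (hS' : ∀ a b, ContDiff ℝ (⊤ : ℕ∞) (S' a b)) (hS'sym : ∀ a b, S' a b = S' b a)
    (hγ' : ∀ a, ContDiff ℝ (⊤ : ℕ∞) (γ' a)) (hθ' : ContDiff ℝ (⊤ : ℕ∞) θ')
    (w₀ : ℝ) (hw₀ : w₀ ∉ ({0, 1/2, 1} : Set ℝ))
    (heq : ∀ f : (Fin n → ℝ) → ℝ, ContDiff ℝ (⊤ : ℕ∞) f →
      canonicalPencil S γ θ w₀ f = canonicalPencil S' γ' θ' w₀ f) :
    (∀ a b, S a b = S' a b) ∧ (∀ a, γ a = γ' a) ∧ θ = θ' :=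
  canonicalPencil_unique_through_nonsingular_weight_general S S' γ γ' θ θ' hSsym hS'sym w₀ hw₀ heq
end
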